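/- Every graph obtained from the complete graph K_4 by performing a finite sequence of 2-lifts has twin-width at most 6. -/

import Mathlib

/-- A trigraph: a finite vertex set with disjoint black and red edge sets. -/
structure Trigraph (V : Type*) where
  verts : Finset V
  black : V → V → Prop
  red : V → V → Prop
  black_symm : ∀ u v, black u v → black v u
  red_symm : ∀ u v, red u v → red v u
  black_irrefl : ∀ u, ¬ black u u
  red_irrefl : ∀ u, ¬ red u u
  black_red_disjoint : ∀ u v, black u v → ¬ red u v
  black_mem : ∀ u v, black u v → u ∈ verts ∧ v ∈ verts
  red_mem : ∀ u v, red u v → u ∈ verts ∧ v ∈ verts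

namespace Trigraph

variable {V : Type*} [DecidableEq V]

/-- The red degree of a vertex. -/
noncomputable def redDeg (G : Trigraph V) (x : V) : ℕ := {y | G.red x y}.ncard

/-- `G` is a `d`-trigraph: every vertex is incident to at most `d` red edges. -/
def RedDegLE (G : Trigraph V) (d : ℕ) : Prop := ∀ x, G.redDeg x ≤ d

/-- `G'` is obtained from `G` by contracting the two distinct vertices `u` and `v`
(the contracted vertex is represented by `u`, and `v` is deleted). -/
def IsContractionAt (G G' : Trigraph V) (u v : V) : Prop :=
  u ∈ G.verts ∧ v ∈ G.verts ∧ u ≠ v ∧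
  G'.verts = G.verts.erase v ∧
  (∀ x y, x ≠ u → y ≠ u → (G'.black x y ↔ (G.black x y ∧ x ≠ v ∧ y ≠ v))) ∧
  (∀ x y, x ≠ u → y ≠ u → (G'.red x y ↔ (G.red x y ∧ x ≠ v ∧ y ≠ v))) ∧
  (∀ x, x ≠ u → x ≠ v → (G'.black u x ↔ (G.black u x ∧ G.black v x))) ∧
  (∀ x, x ≠ u → x ≠ v →
    (G'.red u x ↔
      ((G.black u x ∨ G.red u x ∨ G.black v x ∨ G.red v x) ∧ ¬ (G.black u x ∧ G.black v x))))

/-- `G'` is obtained from `G` by contracting some pair of vertices. -/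
def IsContraction (G G' : Trigraph V) : Prop := ∃ u v, IsContractionAt G G' u v

/-- `G` admits a `d`-sequence: a sequence `G = G_n, …, G_1` of `d`-trigraphs, each obtained
from the previous one by a contraction, ending in a one-vertex trigraph. -/
def HasSeq (G : Trigraph V) (d : ℕ) : Prop :=
  ∃ f : ℕ → Trigraph V,
    f G.verts.card = G ∧
    (∀ i, 1 ≤ i → i < G.verts.card → IsContraction (f (i + 1)) (f i)) ∧
    (∀ i, 1 ≤ i → i ≤ G.verts.card → (f i).RedDegLE d)

/-- The twin-width of a trigraph: the least `d` such that it admits a `d`-sequence. -/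
noncomputable def tww (G : Trigraph V) : ℕ := sInf {d | G.HasSeq d}

end Trigraph

/-- The trigraph induced by a simple graph `G` on the vertex set `s`: all edges black. -/
def SimpleGraph.toTrigraphOn {V : Type*} (G : SimpleGraph V) (s : Finset V) : Trigraph V where
  verts := s
  black u v := G.Adj u v ∧ u ∈ s ∧ v ∈ s
  red _ _ := False
  black_symm := fun _ _ ⟨h, hu, hv⟩ => ⟨h.symm, hv, hu⟩
  red_symm := fun _ _ h => h.elim
  black_irrefl := fun u h => G.loopless.irrefl u h.1
  red_irrefl := fun _ h => h
  black_red_disjoint := fun _ _ _ h => h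
  black_mem := fun _ _ ⟨_, hu, hv⟩ => ⟨hu, hv⟩
  red_mem := fun _ _ h => h.elim

/-- The trigraph associated to a finite simple graph: all edges black. -/
def SimpleGraph.toTrigraph {V : Type*} [Fintype V] (G : SimpleGraph V) : Trigraph V :=
  G.toTrigraphOn Finset.univ

/-- Iterated 2-lift vertex types, starting from K4. -/
def LiftType : ℕ → Type
  | 0 => Fin 4
  | k + 1 => LiftType k × Bool

instance liftTypeFintype : ∀ k, Fintype (LiftType k)
  | 0 => inferInstanceAs (Fintype (Fin 4))
  | (k + 1) => letI := liftTypeFintype k; inferInstanceAs (Fintype (LiftType k × Bool))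

instance liftTypeDecEq : ∀ k, DecidableEq (LiftType k)
  | 0 => inferInstanceAs (DecidableEq (Fin 4))
  | (k + 1) => letI := liftTypeDecEq k; inferInstanceAs (DecidableEq (LiftType k × Bool))

/-- `G'` is a 2-lift of `G`. -/
def IsTwoLift {V : Type*} (G : SimpleGraph V) (G' : SimpleGraph (V × Bool)) : Prop :=
  ∃ sign : V → V → Bool,
    (∀ u v, sign u v = sign v u) ∧
    ∀ u v i j, G'.Adj (u, i) (v, j) ↔
      (G.Adj u v ∧ ((sign u v = true ∧ i = j) ∨ (sign u v = false ∧ i ≠ j)))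

/-!
Induct on the number of lifts, proving that every red/black colouring of the edges has a
`6`-sequence. The base `K₄` has only four vertices, so every red degree stays below `4`. For a
2-lift `G'` of a graph `G` of maximum degree `Δ`, contract the fibres `{(v, false), (v, true)}` one
at a time: in every intermediate trigraph a vertex over `w` is red-adjacent only to vertices over
neighbours of `w` in `G`, at most `2Δ` of them. After the last fibre we are left with `G` with
all edges red, which has a `2Δ`-sequence by induction, and 2-lifts preserve maximum degree `3`.
-/

namespace Trigraph

variable {V W : Type*} {G H : Trigraph V} {d : ℕ}

theorem ext (hv : G.verts = H.verts) (hb : G.black = H.black) (hr : G.red = H.red) : G = H := by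
  cases G; cases H; cases hv; cases hb; cases hr; rfl

theorem redDeg_le_card_sub_one (G : Trigraph V) (x : V) : G.redDeg x ≤ G.verts.card - 1 := by
  classical
  by_cases hx : x ∈ G.verts
  · calc G.redDeg x ≤ (↑(G.verts.erase x) : Set V).ncard :=
          Set.ncard_le_ncard fun y (hy : G.red x y) => by
            simpa using And.intro (G.red_mem _ _ hy).2 fun h : y = x => G.red_irrefl x (h ▸ hy)
      _ = G.verts.card - 1 := by rw [Set.ncard_coe_finset, Finset.card_erase_of_mem hx]
  · have : {y | G.red x y} = ∅ := Set.eq_empty_of_forall_notMem fun y hy =>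
      hx (G.red_mem _ _ hy).1
    simp [redDeg, this]

theorem redDegLE_of_card_le (h : G.verts.card ≤ d + 1) : G.RedDegLE d := fun x =>
  (G.redDeg_le_card_sub_one x).trans (by omega)

def map (e : V ↪ W) (G : Trigraph V) : Trigraph W where
  verts := G.verts.map e
  black := Relation.Map G.black e e
  red := Relation.Map G.red e e
  black_symm := by rintro _ _ ⟨a, b, h, rfl, rfl⟩; exact ⟨b, a, G.black_symm _ _ h, rfl, rfl⟩
  red_symm := by rintro _ _ ⟨a, b, h, rfl, rfl⟩; exact ⟨b, a, G.red_symm _ _ h, rfl, rfl⟩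
  black_irrefl := by rintro _ ⟨a, b, h, rfl, hab⟩; exact G.black_irrefl a (e.injective hab ▸ h)
  red_irrefl := by rintro _ ⟨a, b, h, rfl, hab⟩; exact G.red_irrefl a (e.injective hab ▸ h)
  black_red_disjoint := by
    rintro _ _ ⟨a, b, h, rfl, rfl⟩ hr
    exact G.black_red_disjoint a b h ((Relation.map_apply_apply e.injective e.injective _ _ _).1 hr)
  black_mem := by
    rintro _ _ ⟨a, b, h, rfl, rfl⟩
    exact ⟨Finset.mem_map_of_mem e (G.black_mem _ _ h).1,
      Finset.mem_map_of_mem e (G.black_mem _ _ h).2⟩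
  red_mem := by
    rintro _ _ ⟨a, b, h, rfl, rfl⟩
    exact ⟨Finset.mem_map_of_mem e (G.red_mem _ _ h).1,
      Finset.mem_map_of_mem e (G.red_mem _ _ h).2⟩

theorem map_redDeg_apply (e : V ↪ W) (G : Trigraph V) (x : V) :
    (G.map e).redDeg (e x) = G.redDeg x := by
  have : {y | (G.map e).red (e x) y} = e '' {y | G.red x y} := by
    ext y
    simp [Trigraph.map, Relation.Map, e.injective.eq_iff, eq_comm]
  rw [redDeg, this, Set.ncard_image_of_injective _ e.injective, redDeg]

theorem RedDegLE.map (h : G.RedDegLE d) (e : V ↪ W) : (G.map e).RedDegLE d := by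
  intro w
  by_cases hw : w ∈ Set.range e
  · obtain ⟨x, rfl⟩ := hw
    exact (G.map_redDeg_apply e x).trans_le (h x)
  · have : {y | (G.map e).red w y} = ∅ :=
      Set.eq_empty_of_forall_notMem fun y ⟨a, _, _, ha, _⟩ => hw ⟨a, ha⟩
    simp [redDeg, this]

section DecidableEq

variable [DecidableEq V] [DecidableEq W]

theorem HasSeq.of_isContractionAt {u v : V} (hGH : IsContractionAt G H u v)
    (hG : G.RedDegLE d) (hH : H.HasSeq d) : G.HasSeq d := by
  obtain ⟨-, hv, -, hverts, -⟩ := id hGH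
  have hcard : G.verts.card = H.verts.card + 1 := by
    rw [hverts, Finset.card_erase_of_mem hv, Nat.sub_add_cancel (Finset.card_pos.2 ⟨v, hv⟩)]
  obtain ⟨f, hfH, hf_contr, hf_red⟩ := hH
  refine ⟨Function.update f G.verts.card G, by simp, fun i hi hiG => ?_, fun i hi hiG => ?_⟩
  · rcases (Nat.lt_succ_iff.1 (hcard ▸ hiG)).lt_or_eq with hiH | rfl
    · rw [Function.update_of_ne (by omega), Function.update_of_ne (by omega)]
      exact hf_contr i hi hiH
    · rw [← hcard, Function.update_self, Function.update_of_ne (by omega), hfH]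
      exact ⟨u, v, hGH⟩
  · rcases eq_or_ne i G.verts.card with rfl | hi'
    · simpa using hG
    · rw [Function.update_of_ne hi']
      exact hf_red i hi (by omega)

/-- `u` stands for the class `{u, v}` after the contraction: `a` lies in the class of `x` iff
`a = x ∨ x = u ∧ a = v`. -/
def contract (G : Trigraph V) (u v : V) : Trigraph V where
  verts := G.verts.erase v
  black x y := x ≠ v ∧ y ≠ v ∧
    ∀ a b, (a = x ∨ x = u ∧ a = v) → (b = y ∨ y = u ∧ b = v) → G.black a b
  red x y := x ∈ G.verts.erase v ∧ y ∈ G.verts.erase v ∧ x ≠ y ∧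
    (∃ a b, (a = x ∨ x = u ∧ a = v) ∧ (b = y ∨ y = u ∧ b = v) ∧ (G.black a b ∨ G.red a b)) ∧
    ¬ ∀ a b, (a = x ∨ x = u ∧ a = v) → (b = y ∨ y = u ∧ b = v) → G.black a b
  black_symm _ _ := fun ⟨hx, hy, h⟩ => ⟨hy, hx, fun a b ha hb => G.black_symm _ _ (h b a hb ha)⟩
  red_symm _ _ := fun ⟨hx, hy, hxy, ⟨a, b, ha, hb, hab⟩, h⟩ =>
    ⟨hy, hx, hxy.symm, ⟨b, a, hb, ha, hab.imp (G.black_symm _ _) (G.red_symm _ _)⟩,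
      fun h' => h fun a b ha hb => G.black_symm _ _ (h' b a hb ha)⟩
  black_irrefl x h := G.black_irrefl x (h.2.2 x x (.inl rfl) (.inl rfl))
  red_irrefl _ h := h.2.2.1 rfl
  black_red_disjoint _ _ hb hr := hr.2.2.2.2 hb.2.2
  black_mem x y h :=
    ⟨Finset.mem_erase.2 ⟨h.1, (G.black_mem _ _ (h.2.2 x y (.inl rfl) (.inl rfl))).1⟩,
      Finset.mem_erase.2 ⟨h.2.1, (G.black_mem _ _ (h.2.2 x y (.inl rfl) (.inl rfl))).2⟩⟩
  red_mem _ _ h := ⟨h.1, h.2.1⟩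

theorem isContractionAt_contract {u v : V} (hu : u ∈ G.verts) (hv : v ∈ G.verts) (huv : u ≠ v) :
    IsContractionAt G (G.contract u v) u v := by
  refine ⟨hu, hv, huv, rfl, fun x y hx hy => ?_, fun x y hx hy => ?_, fun x hxu hxv => ?_,
    fun x hxu hxv => ?_⟩
  · simpa [contract, hx, hy] using and_rotate.symm
  · have hmem := G.red_mem x y
    have hdisj := G.black_red_disjoint x y
    have hne : G.red x y → x ≠ y := fun h hxy => G.red_irrefl x (hxy ▸ h)
    simp only [contract, Finset.mem_erase, hx, hy, false_and, or_false, exists_and_left,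
      exists_eq_left, forall_eq_apply_imp_iff, forall_eq]
    tauto
  · simp [contract, hxu, hxv, huv]
  · have hx : G.black u x ∨ G.red u x ∨ G.black v x ∨ G.red v x → x ∈ G.verts := by
      rintro (h | h | h | h)
      exacts [(G.black_mem _ _ h).2, (G.red_mem _ _ h).2, (G.black_mem _ _ h).2,
        (G.red_mem _ _ h).2]
    simp only [contract, Finset.mem_erase]
    simpa [hxu, hxv, huv, hu, hxu.symm, or_assoc] using fun h _ => hx h

theorem hasSeq_of_card_le {G : Trigraph V} (h : G.verts.card ≤ d + 1) : G.HasSeq d := by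
  obtain hG | hG := le_or_gt G.verts.card 1
  · exact ⟨fun _ => G, rfl, fun i hi hiG => by omega, fun _ _ _ => redDegLE_of_card_le h⟩
  · obtain ⟨u, hu, v, hv, huv⟩ := Finset.one_lt_card.1 hG
    have hcard : (G.contract u v).verts.card < G.verts.card := Finset.card_erase_lt_of_mem hv
    exact .of_isContractionAt (isContractionAt_contract hu hv huv) (redDegLE_of_card_le h)
      (hasSeq_of_card_le (hcard.le.trans h))
termination_by G.verts.card

theorem IsContractionAt.map {u v : V} (h : IsContractionAt G H u v) (e : V ↪ W) :
    IsContractionAt (G.map e) (H.map e) (e u) (e v) := by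
  obtain ⟨hu, hv, huv, hverts, hb, hr, hbu, hru⟩ := h
  refine ⟨Finset.mem_map_of_mem e hu, Finset.mem_map_of_mem e hv, e.injective.ne huv,
    by simp [Trigraph.map, hverts, Finset.map_erase], ?_, ?_, ?_, ?_⟩
    <;> intros <;> simp only [Trigraph.map, Relation.Map] <;> aesop

theorem HasSeq.map (h : G.HasSeq d) (e : V ↪ W) : (G.map e).HasSeq d := by
  obtain ⟨f, hf, hf_contr, hf_red⟩ := h
  have hcard : (G.map e).verts.card = G.verts.card := Finset.card_map e
  refine ⟨fun i => (f i).map e, by rw [hcard]; exact congrArg _ hf, fun i hi hiG => ?_,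
    fun i hi hiG => (hf_red i hi (hcard ▸ hiG)).map e⟩
  obtain ⟨u, v, huv⟩ := hf_contr i hi (hcard ▸ hiG)
  exact ⟨e u, e v, huv.map e⟩

end DecidableEq

end Trigraph

namespace SimpleGraph

variable {V : Type*} [Fintype V]

def toTrigraphWithRed (G R : SimpleGraph V) : Trigraph V where
  verts := Finset.univ
  black u v := G.Adj u v ∧ ¬ R.Adj u v
  red u v := G.Adj u v ∧ R.Adj u v
  black_symm _ _ h := ⟨h.1.symm, fun hR => h.2 hR.symm⟩
  red_symm _ _ h := ⟨h.1.symm, h.2.symm⟩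
  black_irrefl _ h := G.irrefl h.1
  red_irrefl _ h := G.irrefl h.1
  black_red_disjoint _ _ hb hr := hb.2 hr.2
  black_mem _ _ _ := ⟨Finset.mem_univ _, Finset.mem_univ _⟩
  red_mem _ _ _ := ⟨Finset.mem_univ _, Finset.mem_univ _⟩

theorem toTrigraph_eq_toTrigraphWithRed_bot (G : SimpleGraph V) :
    G.toTrigraph = G.toTrigraphWithRed ⊥ := by
  refine Trigraph.ext rfl ?_ ?_ <;> ext <;>
    simp [toTrigraph, toTrigraphOn, toTrigraphWithRed]

end SimpleGraph

namespace IsTwoLift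

variable {V : Type*} {G : SimpleGraph V} {G' : SimpleGraph (V × Bool)}

theorem not_adj_and_adj (h : IsTwoLift G G') (v : V) (x : V × Bool) :
    ¬ (G'.Adj (v, false) x ∧ G'.Adj (v, true) x) := by
  obtain ⟨sign, -, hadj⟩ := h
  obtain ⟨w, j⟩ := x
  rw [hadj, hadj]
  cases sign v w <;> cases j <;> simp

theorem adj_or_adj_iff (h : IsTwoLift G G') (v : V) (x : V × Bool) :
    G'.Adj (v, false) x ∨ G'.Adj (v, true) x ↔ G.Adj v x.1 := by
  obtain ⟨sign, -, hadj⟩ := h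
  obtain ⟨w, j⟩ := x
  rw [hadj, hadj]
  cases sign v w <;> cases j <;> simp

theorem adj_fst (h : IsTwoLift G G') {p q : V × Bool} (hpq : G'.Adj p q) : G.Adj p.1 q.1 :=
  (h.adj_or_adj_iff p.1 q).1 (by cases p with | mk v b => cases b <;> simp_all)

theorem ncard_neighborSet_le [Finite V] (h : IsTwoLift G G') {Δ : ℕ}
    (hΔ : ∀ v, (G.neighborSet v).ncard ≤ Δ) (p : V × Bool) : (G'.neighborSet p).ncard ≤ Δ := by
  refine (Set.ncard_le_ncard_of_injOn Prod.fst (fun q hq => h.adj_fst hq) ?_).trans (hΔ p.1)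
  rintro ⟨w, j⟩ (hj : G'.Adj p _) ⟨w', j'⟩ (hj' : G'.Adj p _) (rfl : w = w')
  have := h.not_adj_and_adj w p
  cases j <;> cases j' <;> simp_all [G'.adj_comm p]

end IsTwoLift

section ContractFibres

variable {V : Type*} [Fintype V] [DecidableEq V] {G : SimpleGraph V}
  {G' R : SimpleGraph (V × Bool)}

/-- The trigraph obtained from `G'.toTrigraphWithRed R`, for a 2-lift `G'` of `G`, by contracting
each fibre `{(v, false), (v, true)}` with `v ∈ S` onto `(v, false)`. -/
def contractFibres (G : SimpleGraph V) (G' R : SimpleGraph (V × Bool)) (S : Finset V) :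
    Trigraph (V × Bool) where
  verts := Finset.univ.filter fun p => p.1 ∈ S → p.2 = false
  black p q := p.1 ∉ S ∧ q.1 ∉ S ∧ G'.Adj p q ∧ ¬ R.Adj p q
  red p q := (p.1 ∈ S → p.2 = false) ∧ (q.1 ∈ S → q.2 = false) ∧
    (p.1 ∉ S ∧ q.1 ∉ S ∧ G'.Adj p q ∧ R.Adj p q ∨ (p.1 ∈ S ∨ q.1 ∈ S) ∧ G.Adj p.1 q.1)
  black_symm _ _ h := ⟨h.2.1, h.1, h.2.2.1.symm, fun hR => h.2.2.2 hR.symm⟩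
  red_symm _ _ h := ⟨h.2.1, h.1, h.2.2.imp (fun h => ⟨h.2.1, h.1, h.2.2.1.symm, h.2.2.2.symm⟩)
    fun h => ⟨h.1.symm, h.2.symm⟩⟩
  black_irrefl _ h := G'.irrefl h.2.2.1
  red_irrefl _ h := h.2.2.elim (fun h => G'.irrefl h.2.2.1) fun h => G.irrefl h.2
  black_red_disjoint _ _ hb hr :=
    hr.2.2.elim (fun h => hb.2.2.2 h.2.2.2) fun h => h.1.elim hb.1 hb.2.1
  black_mem _ _ h := ⟨by simp [h.1], by simp [h.2.1]⟩
  red_mem _ _ h := ⟨by simpa using h.1, by simpa using h.2.1⟩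

theorem contractFibres_empty : contractFibres G G' R ∅ = G'.toTrigraphWithRed R := by
  refine Trigraph.ext ?_ ?_ ?_ <;> ext <;> simp [contractFibres, SimpleGraph.toTrigraphWithRed]

theorem contractFibres_univ :
    contractFibres G G' R Finset.univ =
      (G.toTrigraphWithRed ⊤).map (Function.Embedding.sectL V false) := by
  refine Trigraph.ext ?_ ?_ ?_
  · ext ⟨a, i⟩
    cases i <;> simp [contractFibres, SimpleGraph.toTrigraphWithRed, Trigraph.map]
  · ext
    simp [contractFibres, SimpleGraph.toTrigraphWithRed, Trigraph.map, Relation.Map]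
  · ext ⟨a, i⟩ ⟨b, j⟩
    simp [contractFibres, SimpleGraph.toTrigraphWithRed, Trigraph.map, Relation.Map,
      and_iff_left_of_imp G.ne_of_adj, and_comm, and_left_comm, and_assoc]

theorem contractFibres_redDegLE (hl : IsTwoLift G G') {Δ : ℕ}
    (hΔ : ∀ v, (G.neighborSet v).ncard ≤ Δ) (S : Finset V) :
    (contractFibres G G' R S).RedDegLE (2 * Δ) := fun p =>
  calc (contractFibres G G' R S).redDeg p ≤ (G.neighborSet p.1 ×ˢ Set.univ).ncard :=
        Set.ncard_le_ncard fun _ hq =>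
          ⟨hq.2.2.elim (fun h => hl.adj_fst h.2.2.1) And.right, Set.mem_univ _⟩
    _ = (G.neighborSet p.1).ncard * 2 := by
      rw [Set.ncard_prod, Set.ncard_univ, Nat.card_eq_fintype_card, Fintype.card_bool]
    _ ≤ 2 * Δ := by linarith [hΔ p.1]

theorem contractFibres_isContractionAt_insert (hl : IsTwoLift G G') {S : Finset V} {v : V}
    (hv : v ∉ S) :
    Trigraph.IsContractionAt (contractFibres G G' R S) (contractFibres G G' R (insert v S))
      (v, false) (v, true) := by
  have hfst : ∀ x : V × Bool, x ≠ (v, false) → (x.1 = v ↔ x = (v, true)) := by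
    rintro ⟨w, (_ | _)⟩ hx <;> simp_all
  refine ⟨by simp [contractFibres, hv], by simp [contractFibres, hv], by simp, ?_,
    fun x y hx hy => ?_, fun x y hx hy => ?_, fun x hx hx' => ?_, fun x hx hx' => ?_⟩
  · ext ⟨w, (_ | _)⟩ <;> by_cases hw : w = v <;> simp [contractFibres, hw, hv]
  · by_cases hxv : x = (v, true) <;> by_cases hyv : y = (v, true) <;>
      simp [contractFibres, hfst x hx, hfst y hy, hxv, hyv]
  · by_cases hxv : x = (v, true) <;> by_cases hyv : y = (v, true) <;>
      simp [contractFibres, hfst x hx, hfst y hy, hxv, hyv]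
  · exact iff_of_false (fun h => h.1 (Finset.mem_insert_self v S))
      fun ⟨h₁, h₂⟩ => hl.not_adj_and_adj v x ⟨h₁.2.2.1, h₂.2.2.1⟩
  · have := hl.not_adj_and_adj v x
    by_cases hxS : x.1 ∈ S
    · simp [contractFibres, hfst x hx, hx', hv, hxS]
    · simp only [contractFibres, Finset.mem_insert, hfst x hx, hx', hv, hxS, or_false,
        ← hl.adj_or_adj_iff v x]
      tauto

end ContractFibres

theorem IsTwoLift.hasSeq_toTrigraphWithRed {V : Type*} [Fintype V] [DecidableEq V]
    {G : SimpleGraph V} {G' : SimpleGraph (V × Bool)} (hl : IsTwoLift G G') {Δ : ℕ}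
    (hΔ : ∀ v, (G.neighborSet v).ncard ≤ Δ) (hG : (G.toTrigraphWithRed ⊤).HasSeq (2 * Δ))
    (R : SimpleGraph (V × Bool)) : (G'.toTrigraphWithRed R).HasSeq (2 * Δ) := by
  have hcontract : ∀ S : Finset V, (contractFibres G G' R S).HasSeq (2 * Δ) →
      (contractFibres G G' R ∅).HasSeq (2 * Δ) := by
    intro S
    induction S using Finset.induction_on with
    | empty => exact id
    | insert v S hv ih =>
      exact fun h => ih (.of_isContractionAt (contractFibres_isContractionAt_insert hl hv)
        (contractFibres_redDegLE hl hΔ S) h)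
  rw [← contractFibres_empty (G := G)]
  exact hcontract Finset.univ (by rw [contractFibres_univ]; exact hG.map _)

theorem twin_width_iterated_two_lifts (m : ℕ) (Gs : ∀ k, SimpleGraph (LiftType k))
    (h0 : Gs 0 = ⊤) (hlift : ∀ k, k < m → IsTwoLift (Gs k) (Gs (k + 1))) :
    Trigraph.tww (Gs m).toTrigraph ≤ 6 := by
  have key : ∀ k ≤ m, (∀ v, ((Gs k).neighborSet v).ncard ≤ 3) ∧
      ∀ R : SimpleGraph (LiftType k), ((Gs k).toTrigraphWithRed R).HasSeq (2 * 3) := by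
    intro k hk
    induction k with
    | zero =>
      refine ⟨fun v => ?_, fun R => Trigraph.hasSeq_of_card_le ?_⟩
      · rw [h0, SimpleGraph.neighborSet_top, Set.ncard_compl, Set.ncard_singleton,
          Nat.card_eq_fintype_card]
        decide
      · exact (Finset.card_le_univ _).trans (by decide)
    | succ k ih =>
      obtain ⟨hΔ, hseq⟩ := ih (by omega)
      have hl := hlift k (by omega)
      exact ⟨hl.ncard_neighborSet_le hΔ, hl.hasSeq_toTrigraphWithRed hΔ (hseq ⊤)⟩
  rw [SimpleGraph.toTrigraph_eq_toTrigraphWithRed_bot]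
  exact Nat.sInf_le ((key m le_rfl).2 ⊥)
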